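/- Let Λ be the ring of symmetric functions over a field of characteristic p > 0, with p-differential d determined by d(e_k) = e_1 e_k − e_{k+1} (extended as a derivation, satisfying d^p = 0 on Λ). The Schur function s_λ satisfies d(s_λ) = Σ_{μ = λ + B} ct(B) s_μ, the sum over all partitions μ obtained from λ by adding one box B, where ct(B) is the content (column index minus row index) of the added box. -/
import Mathlib


open MvPolynomial

/-- The complete homogeneous symmetric polynomials `h_m` in `N` variables,
defined from the elementary symmetric polynomials by the Newton-type recursion
`h_m = Σ_{i=1}^m (−1)^{i+1} e_i h_{m−i}` (equivalently
`Σ_{i=0}^m (−1)^i e_i h_{m−i} = 0` for `m ≥ 1`). -/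
noncomputable def hsymmRec (k : Type*) [Field k] (N : ℕ) : ℕ → MvPolynomial (Fin N) k
  | 0 => 1
  | m + 1 => ∑ i ∈ Finset.range (m + 1),
      (-1 : MvPolynomial (Fin N) k) ^ i * (esymm (Fin N) k (i + 1) * hsymmRec k N (m - i))

/-- `h_m` extended to integer indices by `0` for negative `m`. -/
noncomputable def hsymmZ (k : Type*) [Field k] (N : ℕ) (m : ℤ) : MvPolynomial (Fin N) k :=
  if 0 ≤ m then hsymmRec k N m.toNat else 0

/-- The Schur polynomial `s_λ` (in `N` variables), via the Jacobi–Trudi formula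
`s_λ = det (h_{λ_i − i + j})_{i,j}` with a determinant of size `L`. -/
noncomputable def schurJT (k : Type*) [Field k] (N : ℕ) (lam : ℕ → ℕ) (L : ℕ) :
    MvPolynomial (Fin N) k :=
  (Matrix.of fun i j : Fin L =>
    hsymmZ k N ((lam i : ℤ) - (i : ℤ) + (j : ℤ))).det

section Helpers

open Matrix Finset

/- ## Generic matrix lemmas -/

theorem updRow_updRow {n : ℕ} {R : Type*} [CommRing R] (M : Matrix (Fin n) (Fin n) R)
    (i : Fin n) (v w : Fin n → R) : (M.updateRow i v).updateRow i w = M.updateRow i w := by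
  ext r c
  by_cases h : r = i <;> simp [updateRow_apply, h]

theorem det_updateRow_eq_sum {n : ℕ} {R : Type*} [CommRing R] (M : Matrix (Fin n) (Fin n) R)
    (i : Fin n) (v : Fin n → R) :
    (M.updateRow i v).det = ∑ j, v j * adjugate M j i := by
  rw [det_eq_sum_mul_adjugate_row _ i]
  congr 1; ext j
  rw [updateRow_self]
  congr 1
  rw [adjugate_apply, adjugate_apply, updRow_updRow]

theorem det_updateCol_eq_sum {n : ℕ} {R : Type*} [CommRing R] (M : Matrix (Fin n) (Fin n) R)
    (j : Fin n) (w : Fin n → R) :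
    (M.updateCol j w).det = ∑ i, w i * adjugate M j i := by
  rw [← det_transpose, ← updateRow_transpose, det_updateRow_eq_sum _ j w]
  congr 1; ext i
  rw [← adjugate_transpose]
  rfl

/-- If the last row of `M` is `(0,…,0,1)`, then replacing the last column by anything
only sees its last entry. -/
theorem det_updateCol_of_single_row {n : ℕ} {R : Type*} [CommRing R]
    (M : Matrix (Fin (n+1)) (Fin (n+1)) R)
    (h : M (Fin.last n) = Pi.single (Fin.last n) 1) (v : Fin (n+1) → R) :
    (M.updateCol (Fin.last n) v).det = v (Fin.last n) * M.det := by
  rw [det_updateCol_eq_sum]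
  rw [Finset.sum_eq_single (Fin.last n)]
  · congr 1
    rw [adjugate_apply, ← h, updateRow_eq_self]
  · intro i _ hi
    rw [adjugate_apply]
    have hrow : (M.updateRow i (Pi.single (Fin.last n) 1)) i
        = (M.updateRow i (Pi.single (Fin.last n) 1)) (Fin.last n) := by
      rw [updateRow_self, updateRow_ne hi.symm, h]
    rw [det_zero_of_row_eq hi hrow, mul_zero]
  · intro h'
    exact absurd (Finset.mem_univ _) h'

/- ## Derivations of products and determinants -/

theorem myDeriv_prod {k R : Type*} [CommRing k] [CommRing R] [Algebra k R] (D : Derivation k R R)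
    {ι : Type*} [DecidableEq ι] (s : Finset ι) (f : ι → R) :
    D (∏ x ∈ s, f x) = ∑ x ∈ s, D (f x) * ∏ y ∈ s.erase x, f y := by
  induction s using Finset.induction_on with
  | empty => simp
  | @insert a s hx ih =>
    rw [Finset.prod_insert hx, D.leibniz, smul_eq_mul, smul_eq_mul, ih,
      Finset.sum_insert hx, Finset.erase_insert hx, Finset.mul_sum]
    have h2 : ∀ x ∈ s, D (f x) * ∏ y ∈ (insert a s).erase x, f y
        = f a * (D (f x) * ∏ y ∈ s.erase x, f y) := by
      intro x hxs
      have hax : a ∉ s.erase x := fun h => hx (Finset.erase_subset _ _ h)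
      rw [Finset.erase_insert_of_ne (by rintro rfl; exact hx hxs), Finset.prod_insert hax]
      ring
    rw [Finset.sum_congr rfl h2]
    ring

theorem myDeriv_det {k R : Type*} [CommRing k] [CommRing R] [Algebra k R] (D : Derivation k R R)
    {n : ℕ} (M : Matrix (Fin n) (Fin n) R) :
    D M.det = ∑ i, (M.updateRow i (fun j => D (M i j))).det := by
  have rhs : ∀ i : Fin n, (M.updateRow i (fun j => D (M i j))).det
      = ∑ σ : Equiv.Perm (Fin n), Equiv.Perm.sign σ •
          ∏ c, (if σ c = i then D (M i c) else M (σ c) c) := by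
    intro i
    rw [Matrix.det_apply]
    refine Finset.sum_congr rfl fun σ _ => ?_
    congr 1
    exact Finset.prod_congr rfl fun c _ => Matrix.updateRow_apply
  simp only [rhs]
  rw [Finset.sum_comm]
  rw [Matrix.det_apply, map_sum]
  refine Finset.sum_congr rfl fun σ _ => ?_
  have key : D (Equiv.Perm.sign σ • ∏ c, M (σ c) c)
      = Equiv.Perm.sign σ • ∑ c₀, D (M (σ c₀) c₀) * ∏ c ∈ Finset.univ.erase c₀, M (σ c) c := by
    rcases Int.units_eq_one_or (Equiv.Perm.sign σ) with h | h <;>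
      simp [h, myDeriv_prod]
  rw [key, ← Equiv.sum_comp σ (fun i => Equiv.Perm.sign σ •
      ∏ c, (if σ c = i then D (M i c) else M (σ c) c)), ← Finset.smul_sum]
  congr 1
  refine Finset.sum_congr rfl fun c₀ _ => ?_
  rw [← Finset.mul_prod_erase Finset.univ _ (Finset.mem_univ c₀)]
  have h1 : (if σ c₀ = σ c₀ then D (M (σ c₀) c₀) else M (σ c₀) c₀) = D (M (σ c₀) c₀) := by simp
  rw [h1]
  congr 1
  refine Finset.prod_congr rfl fun c hc => ?_
  rw [if_neg]
  exact fun h => (Finset.ne_of_mem_erase hc) (σ.injective h)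

/- ## The derivation d -/

noncomputable def dd (k : Type*) [Field k] (N : ℕ) :
    Derivation k (MvPolynomial (Fin N) k) (MvPolynomial (Fin N) k) :=
  MvPolynomial.mkDerivation k (fun i : Fin N => X i ^ 2)

variable {k : Type*} [Field k] {N : ℕ}

theorem dd_prod_X (S : Finset (Fin N)) :
    dd k N (∏ i ∈ S, X i) = (∑ i ∈ S, (X i : MvPolynomial (Fin N) k)) * ∏ i ∈ S, X i := by
  rw [myDeriv_prod, Finset.sum_mul]
  refine Finset.sum_congr rfl fun i hi => ?_
  rw [dd, mkDerivation_X, ← Finset.mul_prod_erase S _ hi]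
  ring

theorem dd_esymm (n : ℕ) :
    dd k N (esymm (Fin N) k n)
      = esymm (Fin N) k 1 * esymm (Fin N) k n
        - ((n + 1 : ℕ) : MvPolynomial (Fin N) k) * esymm (Fin N) k (n + 1) := by
  rw [eq_sub_iff_add_eq']
  have hd : dd k N (esymm (Fin N) k n)
      = ∑ S ∈ Finset.powersetCard n (Finset.univ : Finset (Fin N)),
          (∑ i ∈ S, (X i : MvPolynomial (Fin N) k)) * ∏ i ∈ S, X i := by
    rw [esymm, map_sum]
    exact Finset.sum_congr rfl fun S _ => dd_prod_X S
  have he1 : esymm (Fin N) k 1 * esymm (Fin N) k n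
      = ∑ S ∈ Finset.powersetCard n (Finset.univ : Finset (Fin N)),
          (∑ i, (X i : MvPolynomial (Fin N) k)) * ∏ i ∈ S, X i := by
    rw [esymm_one, esymm, Finset.mul_sum]
  have hrest : ((n + 1 : ℕ) : MvPolynomial (Fin N) k) * esymm (Fin N) k (n + 1)
      = ∑ S ∈ Finset.powersetCard n (Finset.univ : Finset (Fin N)),
          ∑ i ∈ Finset.univ \ S, (X i : MvPolynomial (Fin N) k) * ∏ j ∈ S, X j := by
    rw [esymm, Finset.mul_sum]
    have rhs : ∀ T ∈ Finset.powersetCard (n+1) (Finset.univ : Finset (Fin N)),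
        ((n + 1 : ℕ) : MvPolynomial (Fin N) k) * ∏ j ∈ T, X j
          = ∑ i ∈ T, ∏ j ∈ T, (X j : MvPolynomial (Fin N) k) := by
      intro T hT
      rw [Finset.sum_const, nsmul_eq_mul, (Finset.mem_powersetCard.mp hT).2]
    rw [Finset.sum_congr rfl rhs, Finset.sum_sigma', Finset.sum_sigma']
    refine (Finset.sum_nbij' (fun b => (⟨b.1.erase b.2, b.2⟩ : Σ _ : Finset (Fin N), Fin N))
      (fun a => ⟨insert a.2 a.1, a.2⟩) ?_ ?_ ?_ ?_ ?_)
    · rintro ⟨T, i⟩ hb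
      simp only [Finset.mem_sigma, Finset.mem_powersetCard] at hb ⊢
      obtain ⟨⟨hTu, hcard⟩, hi⟩ := hb
      refine ⟨⟨Finset.subset_univ _, by rw [Finset.card_erase_of_mem hi, hcard]; rfl⟩, ?_⟩
      exact Finset.mem_sdiff.mpr ⟨Finset.mem_univ _, Finset.notMem_erase _ _⟩
    · rintro ⟨S, i⟩ ha
      simp only [Finset.mem_sigma, Finset.mem_powersetCard] at ha ⊢
      obtain ⟨⟨hSu, hcard⟩, hi⟩ := ha
      have hiS : i ∉ S := (Finset.mem_sdiff.mp hi).2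
      exact ⟨⟨Finset.subset_univ _, by rw [Finset.card_insert_of_notMem hiS, hcard]⟩,
        Finset.mem_insert_self _ _⟩
    · rintro ⟨T, i⟩ hb
      simp only [Finset.mem_sigma, Finset.mem_powersetCard] at hb
      simp [Finset.insert_erase hb.2]
    · rintro ⟨S, i⟩ ha
      simp only [Finset.mem_sigma, Finset.mem_powersetCard] at ha
      have hiS : i ∉ S := (Finset.mem_sdiff.mp ha.2).2
      simp [Finset.erase_insert hiS]
    · rintro ⟨T, i⟩ hb
      simp only [Finset.mem_sigma, Finset.mem_powersetCard] at hb
      simp only []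
      rw [← Finset.mul_prod_erase T _ hb.2]
  rw [hd, he1, hrest, ← Finset.sum_add_distrib]
  refine Finset.sum_congr rfl fun S hS => ?_
  rw [← Finset.sum_sdiff (Finset.mem_powersetCard.mp hS).1, add_mul, Finset.sum_mul,
    Finset.sum_mul]

/- ## h basics -/

theorem hsymmRec_zero : hsymmRec k N 0 = 1 := by rw [hsymmRec]

theorem hsymmRec_succ (m : ℕ) : hsymmRec k N (m+1) = ∑ i ∈ Finset.range (m + 1),
    (-1 : MvPolynomial (Fin N) k) ^ i * (esymm (Fin N) k (i + 1) * hsymmRec k N (m - i)) := by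
  rw [hsymmRec]

theorem hsymmRec_one : hsymmRec k N 1 = esymm (Fin N) k 1 := by
  rw [hsymmRec_succ]
  simp [hsymmRec_zero]

theorem dd_neg_one_pow_mul (i : ℕ) (y : MvPolynomial (Fin N) k) :
    dd k N ((-1)^i * y) = (-1)^i * dd k N y := by
  have h : ((-1 : MvPolynomial (Fin N) k))^i = algebraMap k _ ((-1 : k)^i) := by
    simp
  rw [h, Derivation.leibniz, Derivation.map_algebraMap, smul_eq_mul, smul_eq_mul, mul_zero,
    add_zero]

theorem dd_h (m : ℕ) : dd k N (hsymmRec k N m)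
    = ((m + 1 : ℕ) : MvPolynomial (Fin N) k) * hsymmRec k N (m+1)
      - esymm (Fin N) k 1 * hsymmRec k N m := by
  induction m using Nat.strong_induction_on with
  | _ m IH =>
    rcases m with _ | m
    · rw [hsymmRec_zero, Derivation.map_one_eq_zero, hsymmRec_one]
      push_cast
      ring
    · conv_lhs => rw [hsymmRec_succ]
      rw [map_sum]
      have step : ∀ i ∈ Finset.range (m+1),
          dd k N ((-1 : MvPolynomial (Fin N) k)^i *
              (esymm (Fin N) k (i+1) * hsymmRec k N (m - i)))
            = (-1 : MvPolynomial (Fin N) k)^i *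
                (((m + 1 - i : ℕ) : MvPolynomial (Fin N) k) *
                  (esymm (Fin N) k (i+1) * hsymmRec k N (m+1-i)))
              - (-1 : MvPolynomial (Fin N) k)^i *
                (((i + 2 : ℕ) : MvPolynomial (Fin N) k) *
                  (esymm (Fin N) k (i+2) * hsymmRec k N (m-i))) := by
        intro i hi
        have him : i ≤ m := Nat.lt_succ_iff.mp (Finset.mem_range.mp hi)
        rw [dd_neg_one_pow_mul, Derivation.leibniz, smul_eq_mul, smul_eq_mul]
        rw [IH (m - i) (by omega), dd_esymm]
        have e1 : m - i + 1 = m + 1 - i := by omega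
        rw [e1]
        have e3 : i + 1 + 1 = i + 2 := rfl
        rw [e3]
        ring
      rw [Finset.sum_congr rfl step, Finset.sum_sub_distrib]
      set F : ℕ → MvPolynomial (Fin N) k := fun i =>
        (-1 : MvPolynomial (Fin N) k)^i *
          (((m + 1 - i : ℕ) : MvPolynomial (Fin N) k) *
            (esymm (Fin N) k (i+1) * hsymmRec k N (m+1-i))) with hF
      set G : ℕ → MvPolynomial (Fin N) k := fun i =>
        (-1 : MvPolynomial (Fin N) k)^i *
          (((i + 1 : ℕ) : MvPolynomial (Fin N) k) *
            (esymm (Fin N) k (i+1) * hsymmRec k N (m+1-i))) with hG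
      have hS1 : ∑ i ∈ Finset.range (m+1), (-1 : MvPolynomial (Fin N) k)^i *
          (((i + 2 : ℕ) : MvPolynomial (Fin N) k) *
            (esymm (Fin N) k (i+2) * hsymmRec k N (m-i)))
          = -(∑ i ∈ Finset.range (m+2), G i - G 0) := by
        rw [Finset.sum_range_succ' G (m+1)]
        have h2 : ∀ i ∈ Finset.range (m+1), (-1 : MvPolynomial (Fin N) k)^i *
            (((i + 2 : ℕ) : MvPolynomial (Fin N) k) *
              (esymm (Fin N) k (i+2) * hsymmRec k N (m-i))) = -G (i+1) := by
          intro i hi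
          rw [hG]
          simp only []
          have e4 : m + 1 - (i+1) = m - i := by omega
          have e5 : i + 1 + 1 = i + 2 := rfl
          rw [e4, e5, pow_succ]
          push_cast
          ring
        rw [Finset.sum_congr rfl h2, Finset.sum_neg_distrib]
        ring
      have hS2 : ∑ i ∈ Finset.range (m+1), F i = ∑ i ∈ Finset.range (m+2), F i := by
        rw [Finset.sum_range_succ F (m+1)]
        have : F (m+1) = 0 := by
          rw [hF]
          simp
        rw [this, add_zero]
      rw [hS2, hS1]
      have hFG : ∀ i ∈ Finset.range (m+2), F i + G i
          = ((m + 2 : ℕ) : MvPolynomial (Fin N) k) *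
              ((-1 : MvPolynomial (Fin N) k)^i *
                (esymm (Fin N) k (i+1) * hsymmRec k N (m+1-i))) := by
        intro i hi
        have him : i ≤ m + 1 := Nat.lt_succ_iff.mp (Finset.mem_range.mp hi)
        rw [hF, hG]
        simp only []
        have : ((m + 1 - i : ℕ) : MvPolynomial (Fin N) k) + ((i+1 : ℕ) : MvPolynomial (Fin N) k)
            = ((m + 2 : ℕ) : MvPolynomial (Fin N) k) := by
          rw [← Nat.cast_add]
          congr 1
          omega
        rw [← this]
        ring
      have key : ∑ i ∈ Finset.range (m+2), F i - -(∑ i ∈ Finset.range (m+2), G i - G 0)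
          = ∑ i ∈ Finset.range (m+2), (F i + G i) - G 0 := by
        rw [Finset.sum_add_distrib]; ring
      rw [key, Finset.sum_congr rfl hFG, ← Finset.mul_sum, ← hsymmRec_succ (m+1)]
      have hG0 : G 0 = esymm (Fin N) k 1 * hsymmRec k N (m+1) := by
        rw [hG]
        simp
      rw [hG0]

/- ## hZ basics -/

theorem hsymmZ_natCast (n : ℕ) : hsymmZ k N (n : ℤ) = hsymmRec k N n := by
  simp [hsymmZ]

theorem hsymmZ_neg {m : ℤ} (h : m < 0) : hsymmZ k N m = 0 := by
  simp [hsymmZ, not_le.mpr h]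

theorem hsymmZ_zero : hsymmZ k N 0 = 1 := by
  simpa [hsymmRec_zero] using hsymmZ_natCast (k := k) (N := N) 0

theorem hsymmZ_one : hsymmZ k N 1 = esymm (Fin N) k 1 := by
  have := hsymmZ_natCast (k := k) (N := N) 1
  simpa [hsymmRec_one] using this

theorem dd_hZ (m : ℤ) : dd k N (hsymmZ k N m)
    = ((m + 1 : ℤ) : MvPolynomial (Fin N) k) * hsymmZ k N (m+1)
      - esymm (Fin N) k 1 * hsymmZ k N m := by
  rcases le_or_gt 0 m with h | h
  · obtain ⟨n, rfl⟩ := Int.eq_ofNat_of_zero_le h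
    have h1 : ((n : ℤ) + 1) = ((n + 1 : ℕ) : ℤ) := by push_cast; ring
    rw [h1, hsymmZ_natCast, hsymmZ_natCast, dd_h]
    push_cast
    ring
  · rw [hsymmZ_neg h, map_zero]
    rcases eq_or_lt_of_le (Int.add_one_le_iff.mpr h) with h2 | h2
    · rw [h2]
      simp [hsymmZ_zero]
    · rw [hsymmZ_neg h2]
      simp

end Helpers

/-- Let `Λ` be the ring of symmetric functions over a field
`k` of characteristic `p > 0` (rendered here in `N` variables for every `N`),
with the `p`-differential `d` determined by `d(x_i) = x_i²`, equivalently
`d(e_k) = e_1 e_k − e_{k+1}`, extended as a derivation.  For a partition `λ`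
(an antitone, eventually-zero function `ℕ → ℕ`, vanishing from row `L` on),
the Schur function satisfies `d(s_λ) = Σ_{μ = λ + B} ct(B) s_μ`, the sum over
all partitions `μ` obtained from `λ` by adding one box `B` (rows `r` with
`r = 0` or `λ_{r−1} > λ_r`), where `ct(B) = λ_r − r` is the content of the
added box (column minus row, 0-indexed). -/
theorem stmt17 (p : ℕ) [Fact p.Prime] (k : Type*) [Field k] [CharP k p]
    (N : ℕ) (lam : ℕ → ℕ) (hanti : Antitone lam)
    (L : ℕ) (hL : ∀ j, L ≤ j → lam j = 0) :
    (MvPolynomial.mkDerivation k (fun i : Fin N => X i ^ 2))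
        (schurJT k N lam (L + 1)) =
      ∑ r ∈ (Finset.range (L + 1)).filter (fun r => r = 0 ∨ lam r < lam (r - 1)),
        C ((((lam r : ℤ) - (r : ℤ)) : ℤ) : k) *
          schurJT k N (Function.update lam r (lam r + 1)) (L + 1) := by
  classical
  suffices h : dd k N (schurJT k N lam (L + 1)) =
      ∑ r ∈ (Finset.range (L + 1)).filter (fun r => r = 0 ∨ lam r < lam (r - 1)),
        C ((((lam r : ℤ) - (r : ℤ)) : ℤ) : k) *
          schurJT k N (Function.update lam r (lam r + 1)) (L + 1) by
    exact h
  have hlamL : lam L = 0 := hL L le_rfl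
  set R := MvPolynomial (Fin N) k with hR
  set M : Matrix (Fin (L+1)) (Fin (L+1)) R :=
    Matrix.of (fun i j : Fin (L+1) => hsymmZ k N ((lam i : ℤ) - (i : ℤ) + (j : ℤ))) with hM
  have hMdef : ∀ i j : Fin (L+1), M i j = hsymmZ k N ((lam i : ℤ) - (i : ℤ) + (j : ℤ)) :=
    fun i j => rfl
  have hschur : schurJT k N lam (L+1) = M.det := rfl
  -- the bumped matrices
  have hbrow : ∀ i : Fin (L+1),
      (M.updateRow i (fun j => hsymmZ k N ((lam i : ℤ) - (i : ℤ) + (j : ℤ) + 1)))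
        = Matrix.of (fun r j : Fin (L+1) =>
            hsymmZ k N (((Function.update lam (i : ℕ) (lam i + 1)) r : ℤ) - (r : ℤ) + (j : ℤ))) := by
    intro i
    apply Matrix.ext
    intro r j
    by_cases h : r = i
    · subst h
      rw [Matrix.updateRow_self]
      show hsymmZ k N ((lam r : ℤ) - (r : ℤ) + (j : ℤ) + 1)
        = hsymmZ k N (((Function.update lam (r : ℕ) (lam r + 1)) r : ℤ) - (r : ℤ) + (j : ℤ))
      rw [Function.update_self]
      congr 1
      push_cast
      ring
    · rw [Matrix.updateRow_ne h]
      show M r j = hsymmZ k N (((Function.update lam (i : ℕ) (lam i + 1)) r : ℤ) - _ + _)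
      rw [hMdef]
      congr 2
      rw [Function.update_of_ne (fun hc => h (Fin.val_injective hc))]
  have hbrowdet : ∀ i : Fin (L+1),
      (M.updateRow i (fun j => hsymmZ k N ((lam i : ℤ) - (i : ℤ) + (j : ℤ) + 1))).det
        = schurJT k N (Function.update lam (i : ℕ) (lam (i : ℕ) + 1)) (L+1) := by
    intro i
    rw [hbrow i]
    rfl
  -- last row of M is (0,...,0,1)
  have hlastrow : M (Fin.last L) = Pi.single (Fin.last L) 1 := by
    funext j
    rw [hMdef]
    by_cases h : j = Fin.last L
    · subst h
      simp only [Fin.val_last, hlamL]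
      rw [Pi.single_eq_same]
      have : ((0 : ℕ) : ℤ) - (L : ℤ) + (L : ℤ) = 0 := by ring
      rw [this, hsymmZ_zero]
    · have hj : (j : ℕ) < L := by
        have := j.isLt
        have hne : (j : ℕ) ≠ L := fun hc => h (Fin.ext (by simp [hc]))
        omega
      rw [Pi.single_eq_of_ne h]
      apply hsymmZ_neg
      simp only [Fin.val_last, hlamL]
      push_cast
      omega
  -- main computation
  rw [hschur, myDeriv_det (dd k N) M]
  have hterm : ∀ i j : Fin (L+1), dd k N (M i j) * Matrix.adjugate M j i
      = (((lam i : ℤ) - (i : ℤ) : ℤ) : R) *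
          (hsymmZ k N ((lam i : ℤ) - (i : ℤ) + (j : ℤ) + 1) * Matrix.adjugate M j i)
        + (((j : ℤ) + 1 : ℤ) : R) *
          (hsymmZ k N ((lam i : ℤ) - (i : ℤ) + (j : ℤ) + 1) * Matrix.adjugate M j i)
        - esymm (Fin N) k 1 * (M i j * Matrix.adjugate M j i) := by
    intro i j
    rw [hMdef, dd_hZ]
    push_cast
    ring
  calc ∑ i, (M.updateRow i (fun j => dd k N (M i j))).det
      = ∑ i : Fin (L+1), ∑ j : Fin (L+1), dd k N (M i j) * Matrix.adjugate M j i := by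
        exact Finset.sum_congr rfl fun i _ => det_updateRow_eq_sum M i _
    _ = (∑ i : Fin (L+1), ∑ j : Fin (L+1), (((lam i : ℤ) - (i : ℤ) : ℤ) : R) *
          (hsymmZ k N ((lam i : ℤ) - (i : ℤ) + (j : ℤ) + 1) * Matrix.adjugate M j i))
        + (∑ i : Fin (L+1), ∑ j : Fin (L+1), (((j : ℤ) + 1 : ℤ) : R) *
          (hsymmZ k N ((lam i : ℤ) - (i : ℤ) + (j : ℤ) + 1) * Matrix.adjugate M j i))
        - ∑ i : Fin (L+1), ∑ j : Fin (L+1),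
            esymm (Fin N) k 1 * (M i j * Matrix.adjugate M j i) := by
        rw [← Finset.sum_add_distrib, ← Finset.sum_sub_distrib]
        refine Finset.sum_congr rfl fun i _ => ?_
        rw [← Finset.sum_add_distrib, ← Finset.sum_sub_distrib]
        exact Finset.sum_congr rfl fun j _ => hterm i j
    _ = ∑ i : Fin (L+1), (((lam i : ℤ) - (i : ℤ) : ℤ) : R) *
          schurJT k N (Function.update lam (i : ℕ) (lam (i : ℕ) + 1)) (L+1) := by
        have hB : ∑ i : Fin (L+1), ∑ j : Fin (L+1), (((j : ℤ) + 1 : ℤ) : R) *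
            (hsymmZ k N ((lam i : ℤ) - (i : ℤ) + (j : ℤ) + 1) * Matrix.adjugate M j i)
            = ∑ i : Fin (L+1), ∑ j : Fin (L+1),
                esymm (Fin N) k 1 * (M i j * Matrix.adjugate M j i) := by
          have hRHS : ∑ i : Fin (L+1), ∑ j : Fin (L+1),
              esymm (Fin N) k 1 * (M i j * Matrix.adjugate M j i)
              = (L+1 : ℕ) • (esymm (Fin N) k 1 * M.det) := by
            have h1 : ∀ i : Fin (L+1), ∑ j : Fin (L+1),
                esymm (Fin N) k 1 * (M i j * Matrix.adjugate M j i)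
                = esymm (Fin N) k 1 * M.det := by
              intro i
              rw [← Finset.mul_sum, ← Matrix.det_eq_sum_mul_adjugate_row M i]
            rw [Finset.sum_congr rfl fun i _ => h1 i, Finset.sum_const, Finset.card_univ,
              Fintype.card_fin]
          rw [hRHS, Finset.sum_comm]
          have h2 : ∀ j : Fin (L+1), ∑ i : Fin (L+1), (((j : ℤ) + 1 : ℤ) : R) *
              (hsymmZ k N ((lam i : ℤ) - (i : ℤ) + (j : ℤ) + 1) * Matrix.adjugate M j i)
              = (((j : ℤ) + 1 : ℤ) : R) *
                  (M.updateCol j (fun i => hsymmZ k N ((lam i : ℤ) - (i : ℤ) + (j : ℤ) + 1))).det := by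
            intro j
            rw [← Finset.mul_sum, det_updateCol_eq_sum]
          rw [Finset.sum_congr rfl fun j _ => h2 j]
          rw [Finset.sum_eq_single (Fin.last L)]
          · rw [det_updateCol_of_single_row M hlastrow]
            have hv : hsymmZ k N ((lam (Fin.last L : Fin (L+1)) : ℤ) - ((Fin.last L : Fin (L+1)) : ℤ)
                + ((Fin.last L : Fin (L+1)) : ℤ) + 1) = esymm (Fin N) k 1 := by
              have harg : (lam (Fin.last L : Fin (L+1)) : ℤ) - ((Fin.last L : Fin (L+1)) : ℤ)
                  + ((Fin.last L : Fin (L+1)) : ℤ) + 1 = 1 := by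
                simp [Fin.val_last, hlamL]
              rw [harg, hsymmZ_one]
            rw [hv, nsmul_eq_mul]
            have : (((Fin.last L : Fin (L+1)) : ℤ) + 1 : ℤ) = ((L + 1 : ℕ) : ℤ) := by
              simp [Fin.val_last]
            rw [this]
            push_cast
            ring
          · intro j _ hj
            have hjlt : (j : ℕ) < L := by
              have := j.isLt
              have : (j : ℕ) ≠ L := fun hc => hj (Fin.ext (by simp [hc]))
              omega
            set j' : Fin (L+1) := ⟨(j : ℕ) + 1, by omega⟩ with hj'
            have hcols : ∀ r : Fin (L+1),
                (M.updateCol j (fun i => hsymmZ k N ((lam i : ℤ) - (i : ℤ) + (j : ℤ) + 1))) r j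
                  = (M.updateCol j (fun i => hsymmZ k N ((lam i : ℤ) - (i : ℤ) + (j : ℤ) + 1))) r j' := by
              intro r
              rw [Matrix.updateCol_self, Matrix.updateCol_ne (by
                intro hc
                exact absurd (congrArg Fin.val hc) (by simp [hj']))]
              rw [hMdef]
              congr 1
              have hjz : ((j' : Fin (L+1)) : ℤ) = (j : ℤ) + 1 := by
                simp [hj']
              rw [hjz]
              ring
            have hne : j ≠ j' := by
              intro hc
              exact absurd (congrArg Fin.val hc) (by simp [hj'])
            rw [Matrix.det_zero_of_column_eq hne hcols, mul_zero]
          · intro h'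
            exact absurd (Finset.mem_univ _) h'
        rw [hB]
        have hA : ∀ i : Fin (L+1), ∑ j : Fin (L+1), (((lam i : ℤ) - (i : ℤ) : ℤ) : R) *
            (hsymmZ k N ((lam i : ℤ) - (i : ℤ) + (j : ℤ) + 1) * Matrix.adjugate M j i)
            = (((lam i : ℤ) - (i : ℤ) : ℤ) : R) *
                schurJT k N (Function.update lam (i : ℕ) (lam (i : ℕ) + 1)) (L+1) := by
          intro i
          rw [← Finset.mul_sum, ← hbrowdet i, det_updateRow_eq_sum]
        rw [Finset.sum_congr rfl fun i _ => hA i]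
        ring
    _ = ∑ r ∈ (Finset.range (L + 1)).filter (fun r => r = 0 ∨ lam r < lam (r - 1)),
        C ((((lam r : ℤ) - (r : ℤ)) : ℤ) : k) *
          schurJT k N (Function.update lam r (lam r + 1)) (L + 1) := by
        have hfin : ∑ i : Fin (L+1), (((lam i : ℤ) - (i : ℤ) : ℤ) : R) *
            schurJT k N (Function.update lam (i : ℕ) (lam (i : ℕ) + 1)) (L+1)
            = ∑ r ∈ Finset.range (L+1), (((lam r : ℤ) - (r : ℤ) : ℤ) : R) *
                schurJT k N (Function.update lam r (lam r + 1)) (L+1) :=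
          Fin.sum_univ_eq_sum_range (fun r => (((lam r : ℤ) - (r : ℤ) : ℤ) : R) *
            schurJT k N (Function.update lam r (lam r + 1)) (L+1)) (L+1)
        rw [hfin]
        have hvan : ∀ r ∈ Finset.range (L+1),
            (((lam r : ℤ) - (r : ℤ) : ℤ) : R) *
              schurJT k N (Function.update lam r (lam r + 1)) (L+1) ≠ 0 →
            (r = 0 ∨ lam r < lam (r - 1)) := by
          intro r hr hne
          by_contra hcon
          push_neg at hcon
          obtain ⟨hr0, hge⟩ := hcon
          apply hne
          have hrL : r < L + 1 := Finset.mem_range.mp hr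
          have hr1 : 1 ≤ r := Nat.one_le_iff_ne_zero.mpr hr0
          have heq : lam (r-1) = lam r :=
            le_antisymm hge (hanti (by omega))
          have hzero : schurJT k N (Function.update lam r (lam r + 1)) (L+1) = 0 := by
            show (Matrix.of fun i j : Fin (L+1) =>
              hsymmZ k N (((Function.update lam r (lam r + 1)) (i : ℕ) : ℤ)
                - (i : ℤ) + (j : ℤ))).det = 0
            have hne12 : (⟨r-1, by omega⟩ : Fin (L+1)) ≠ (⟨r, by omega⟩ : Fin (L+1)) := by
              intro hc
              have := congrArg Fin.val hc
              simp at this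
              omega
            apply Matrix.det_zero_of_row_eq hne12
            funext j
            show hsymmZ k N (((Function.update lam r (lam r + 1)) (r-1) : ℤ) - ((r-1 : ℕ) : ℤ) + (j : ℤ))
              = hsymmZ k N (((Function.update lam r (lam r + 1)) r : ℤ) - (r : ℤ) + (j : ℤ))
            rw [Function.update_of_ne (by omega), Function.update_self, heq]
            congr 1
            rw [Nat.cast_sub hr1]
            push_cast
            ring
          rw [hzero, mul_zero]
        rw [← Finset.sum_filter_of_ne hvan]
        refine Finset.sum_congr rfl fun r hr => ?_
        rw [map_intCast]
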